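/- arXiv:1204.2112 — 4 statements merged into one kernel-verified Lean document; each statement's English description precedes it below -/
import Mathlib

section
/- Let G be a complete t-partite graph with nonempty parts V_1, ..., V_t. The independence complex Δ_G of G is shellable if and only if at most one of the parts V_i has more than one element. -/
/-!
Independent sets of a complete multipartite graph are exactly the subsets of a single part, so the
facets of its independence complex are the parts, and distinct facets are disjoint. When facets
are pairwise disjoint, `F j \ F l = F j` for every `l ≠ j`, so the shelling condition says exactly
that every facet after the first one is a single vertex: a shelling exists iff at most one part is
not a singleton, and then it lists that part first.
-/

variable {V : Type*} [Fintype V] [DecidableEq V]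


/-- `S` is an independent set of `G`. -/
def IsIndep (G : SimpleGraph V) (S : Set V) : Prop :=
  ∀ ⦃a b : V⦄, a ∈ S → b ∈ S → ¬ G.Adj a b

/-- `S` is a maximal independent set of `G`. -/
def IsMaxIndep (G : SimpleGraph V) (S : Set V) : Prop :=
  IsIndep G S ∧ ∀ T : Set V, IsIndep G T → S ⊆ T → S = T


/-- `A` is a facet of the independence complex of `G`,
i.e. a maximal independent set viewed as a `Finset`. -/
def IsFacet (G : SimpleGraph V) (A : Finset V) : Prop :=
  IsIndep G (↑A) ∧ ∀ B : Finset V, IsIndep G (↑B) → A ⊆ B → A = B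

/-- The independence complex of `G` is shellable: its facets can be ordered
`F 0, …, F (s-1)` so that for all `i < j` there are `v ∈ F j \ F i` and `l < j`
with `F j \ F l = {v}`. -/
def Shellable (G : SimpleGraph V) : Prop :=
  ∃ (s : ℕ) (F : Fin s → Finset V),
    Function.Injective F ∧
    (∀ A : Finset V, IsFacet G A ↔ ∃ i, F i = A) ∧
    ∀ i j : Fin s, i < j →
      ∃ v ∈ F j, v ∉ F i ∧ ∃ l : Fin s, l < j ∧ F j \ F l = {v}

open Finset Function

variable {α : Type*}

def IsShellingOrder [DecidableEq α] {s : ℕ} (F : Fin s → Finset α) : Prop :=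
  ∀ i j : Fin s, i < j → ∃ v ∈ F j, v ∉ F i ∧ ∃ l : Fin s, l < j ∧ F j \ F l = {v}

theorem isShellingOrder_iff_card_eq_one [DecidableEq α] {s : ℕ} {F : Fin s → Finset α}
    (hdisj : Pairwise (Disjoint on F)) :
    IsShellingOrder F ↔ ∀ i j : Fin s, i < j → #(F j) = 1 := by
  constructor
  · intro h i j hij
    obtain ⟨v, -, -, l, hl, hv⟩ := h i j hij
    rw [sdiff_eq_self_of_disjoint (hdisj hl.ne')] at hv
    rw [hv, card_singleton]
  · intro h i j hij
    obtain ⟨v, hv⟩ := card_eq_one.mp (h i j hij)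
    have hvj : v ∈ F j := by simp [hv]
    exact ⟨v, hvj, disjoint_left.mp (hdisj hij.ne') hvj, i, hij,
      (sdiff_eq_self_of_disjoint (hdisj hij.ne')).trans hv⟩

section Facets

variable [DecidableEq α] {G : SimpleGraph α}

theorem shellable_of_isEmpty [IsEmpty α] (G : SimpleGraph α) : Shellable G := by
  refine ⟨1, fun _ => ∅, fun _ _ _ => Subsingleton.elim _ _, fun A => ?_, fun i j hij => ?_⟩
  · rw [eq_empty_of_isEmpty A]
    exact iff_of_true ⟨fun a => isEmptyElim a, fun B _ _ => (eq_empty_of_isEmpty B).symm⟩ ⟨0, rfl⟩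
  · exact absurd hij (Subsingleton.elim i j).not_lt

theorem Shellable.eq_of_one_lt_card (hG : Shellable G)
    (hdisj : ∀ A B, IsFacet G A → IsFacet G B → A ≠ B → Disjoint A B)
    {A B : Finset α} (hA : IsFacet G A) (hB : IsFacet G B) (hA1 : 1 < #A) (hB1 : 1 < #B) :
    A = B := by
  obtain ⟨s, F, hinj, hfacet, hshell⟩ := hG
  have hFdisj : Pairwise (Disjoint on F) := fun i j hij =>
    hdisj _ _ ((hfacet _).mpr ⟨i, rfl⟩) ((hfacet _).mpr ⟨j, rfl⟩) (hinj.ne hij)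
  have hcard := (isShellingOrder_iff_card_eq_one hFdisj).mp hshell
  obtain ⟨a, rfl⟩ := (hfacet A).mp hA
  obtain ⟨b, rfl⟩ := (hfacet B).mp hB
  rcases lt_trichotomy a b with hab | rfl | hab
  · exact absurd (hcard a b hab) hB1.ne'
  · rfl
  · exact absurd (hcard b a hab) hA1.ne'

end Facets

theorem exists_forall_ne_card_eq_one {ι β : Type*} [Nonempty ι] {P : ι → Finset β}
    (hne : ∀ i, (P i).Nonempty) (h : ∀ i j, 1 < #(P i) → 1 < #(P j) → i = j) :
    ∃ i₀, ∀ j, j ≠ i₀ → #(P j) = 1 := by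
  by_cases hbig : ∃ i, 1 < #(P i)
  · obtain ⟨i₀, hi₀⟩ := hbig
    refine ⟨i₀, fun j hj => ?_⟩
    have := (hne j).card_pos
    by_contra hj1
    exact hj (h j i₀ (by omega) hi₀)
  · simp only [not_exists, not_lt] at hbig
    exact ⟨Classical.arbitrary ι, fun j _ => le_antisymm (hbig j) (hne j).card_pos⟩

section CompleteMultipartite

variable {ι : Type*} {G : SimpleGraph α} {part : α → ι}

theorem isIndep_iff_forall_part_eq (hadj : ∀ a b : α, G.Adj a b ↔ part a ≠ part b) {S : Set α} :
    IsIndep G S ↔ ∀ a ∈ S, ∀ b ∈ S, part a = part b := by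
  simp only [IsIndep, hadj, not_not]
  exact ⟨fun h a ha b hb => h ha hb, fun h a b ha hb => h a ha b hb⟩

variable [Fintype α] [DecidableEq ι]

def fiberFinset (part : α → ι) (i : ι) : Finset α := {v | part v = i}

@[simp]
theorem mem_fiberFinset {i : ι} {v : α} : v ∈ fiberFinset part i ↔ part v = i := by
  simp [fiberFinset]

theorem ncard_preimage_singleton (i : ι) : (part ⁻¹' {i}).ncard = #(fiberFinset part i) := by
  rw [← Set.ncard_coe_finset]
  congr 1
  ext v
  simp

theorem pairwise_disjoint_fiberFinset : Pairwise (Disjoint on fiberFinset part) :=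
  fun _ _ hij => disjoint_left.mpr fun _ hvi hvj =>
    hij ((mem_fiberFinset.mp hvi).symm.trans (mem_fiberFinset.mp hvj))

theorem fiberFinset_nonempty (hsurj : Surjective part) (i : ι) : (fiberFinset part i).Nonempty :=
  let ⟨v, hv⟩ := hsurj i
  ⟨v, mem_fiberFinset.mpr hv⟩

theorem fiberFinset_injective (hsurj : Surjective part) : Injective (fiberFinset part) :=
  fun i j hij => by
    obtain ⟨v, hv⟩ := fiberFinset_nonempty hsurj i
    exact (mem_fiberFinset.mp hv).symm.trans (mem_fiberFinset.mp (hij ▸ hv))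

variable (hadj : ∀ a b : α, G.Adj a b ↔ part a ≠ part b)
include hadj

theorem isFacet_fiberFinset {i : ι} (hi : ∃ v, part v = i) : IsFacet G (fiberFinset part i) := by
  obtain ⟨v, rfl⟩ := hi
  refine ⟨(isIndep_iff_forall_part_eq hadj).mpr fun a ha b hb => ?_, fun B hB hsub => ?_⟩
  · simp_all
  · refine hsub.antisymm fun b hb => mem_fiberFinset.mpr ?_
    exact (isIndep_iff_forall_part_eq hadj).mp hB b hb v (hsub (mem_fiberFinset.mpr rfl))

theorem IsFacet.exists_eq_fiberFinset [Nonempty α] {A : Finset α} (hA : IsFacet G A) :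
    ∃ i, A = fiberFinset part i := by
  obtain ⟨hind, hmax⟩ := hA
  obtain ⟨a, ha⟩ : A.Nonempty := by
    obtain ⟨v⟩ := ‹Nonempty α›
    by_contra h
    rw [not_nonempty_iff_eq_empty] at h
    subst h
    exact singleton_ne_empty v (hmax {v} (by simp [isIndep_iff_forall_part_eq hadj])
      (empty_subset _)).symm
  refine ⟨part a, hmax _ (isFacet_fiberFinset hadj ⟨a, rfl⟩).1 fun b hb => ?_⟩
  exact mem_fiberFinset.mpr ((isIndep_iff_forall_part_eq hadj).mp hind b hb a ha)

theorem IsFacet.disjoint [Nonempty α] {A B : Finset α} (hA : IsFacet G A) (hB : IsFacet G B)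
    (hAB : A ≠ B) : Disjoint A B := by
  obtain ⟨i, rfl⟩ := hA.exists_eq_fiberFinset hadj
  obtain ⟨j, rfl⟩ := hB.exists_eq_fiberFinset hadj
  exact pairwise_disjoint_fiberFinset fun hij => hAB (hij ▸ rfl)

theorem isFacet_iff_exists_fiberFinset_eq [Nonempty α] (hsurj : Surjective part)
    {A : Finset α} : IsFacet G A ↔ ∃ i, fiberFinset part i = A := by
  refine ⟨fun hA => ?_, fun ⟨i, hi⟩ => hi ▸ isFacet_fiberFinset hadj (hsurj i)⟩
  obtain ⟨i, rfl⟩ := hA.exists_eq_fiberFinset hadj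
  exact ⟨i, rfl⟩

end CompleteMultipartite

theorem shellable_of_forall_ne_card_eq_one [Fintype α] [DecidableEq α] [Nonempty α]
    {G : SimpleGraph α} {t : ℕ} {part : α → Fin t}
    (hadj : ∀ a b : α, G.Adj a b ↔ part a ≠ part b) (hsurj : Surjective part) {i₀ : Fin t}
    (h : ∀ j, j ≠ i₀ → #(fiberFinset part j) = 1) : Shellable G := by
  let σ := Equiv.swap ⟨0, i₀.pos⟩ i₀
  refine ⟨t, fiberFinset part ∘ σ, (fiberFinset_injective hsurj).comp σ.injective, fun A => ?_, ?_⟩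
  · rw [isFacet_iff_exists_fiberFinset_eq hadj hsurj]
    exact σ.surjective.exists
  refine (isShellingOrder_iff_card_eq_one
    (pairwise_disjoint_fiberFinset.comp_of_injective σ.injective)).mpr fun i j hij => h _ ?_
  intro hj
  rw [Equiv.swap_apply_eq_iff, Equiv.swap_apply_right] at hj
  subst hj
  exact Nat.not_lt_zero _ hij

/-- A complete t-partite graph is shellable iff at most one part has more than
one element. -/
theorem stmt_4 (G : SimpleGraph V) (t : ℕ) (part : V → Fin t)
    (hsurj : Function.Surjective part)
    (hadj : ∀ a b : V, G.Adj a b ↔ part a ≠ part b) :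
    Shellable G ↔
      ∀ i j : Fin t, 1 < (part ⁻¹' {i} : Set V).ncard →
        1 < (part ⁻¹' {j} : Set V).ncard → i = j := by
  rcases isEmpty_or_nonempty V with hV | hV
  · have := hsurj.isEmpty
    exact iff_of_true (shellable_of_isEmpty G) fun i => isEmptyElim i
  simp only [ncard_preimage_singleton]
  constructor
  · intro hG i j hi hj
    exact fiberFinset_injective hsurj (hG.eq_of_one_lt_card (fun _ _ => IsFacet.disjoint hadj)
      (isFacet_fiberFinset hadj (hsurj i)) (isFacet_fiberFinset hadj (hsurj j)) hi hj)
  · intro h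
    have : Nonempty (Fin t) := ⟨part (Classical.arbitrary V)⟩
    obtain ⟨i₀, hi₀⟩ := exists_forall_ne_card_eq_one (fiberFinset_nonempty hsurj) h
    exact shellable_of_forall_ne_card_eq_one hadj hsurj hi₀
end

section
/- Let G be a complete t-partite graph with nonempty parts. The independence complex of G is vertex decomposable if and only if at most one of the parts has more than one element. -/
variable {V : Type*} [Fintype V] [DecidableEq V]


/-- Deletion of a vertex from a simplicial complex (as a set of finsets). -/
def delC (Δ : Set (Finset V)) (v : V) : Set (Finset V) := {A ∈ Δ | v ∉ A}

/-- Link of a vertex in a simplicial complex. -/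
def linkC (Δ : Set (Finset V)) (v : V) : Set (Finset V) :=
  {A | v ∉ A ∧ insert v A ∈ Δ}

/-- `A` is a facet (maximal face) of the complex `Δ`. -/
def IsFacetOf (Δ : Set (Finset V)) (A : Finset V) : Prop :=
  A ∈ Δ ∧ ∀ B ∈ Δ, A ⊆ B → A = B

/-- Vertex decomposability of a simplicial complex. -/
inductive VertexDecomposable : Set (Finset V) → Prop
  | simplex (Δ : Set (Finset V)) (h : Δ = ∅ ∨ ∃ F : Finset V, Δ = {A | A ⊆ F}) :
      VertexDecomposable Δ
  | step (Δ : Set (Finset V)) (v : V)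
      (hdel : VertexDecomposable (delC Δ v))
      (hlink : VertexDecomposable (linkC Δ v))
      (hnf : ∀ A ∈ linkC Δ v, ¬ IsFacetOf (delC Δ v) A) :
      VertexDecomposable Δ

/-- The independence complex of `G`: faces are the independent finsets. -/
def indComplex (G : SimpleGraph V) : Set (Finset V) :=
  {A : Finset V | IsIndep G (↑A)}

/-!
The independence complex of a complete multipartite graph is the disjoint union of the
simplices on its parts. If at most one part is large, every singleton part is an isolated
vertex whose link is `{∅}`, and `∅` is not a facet of the deletion as long as another vertex
remains; shedding these vertices one at a time leaves a simplex. Conversely, a vertex `v` in a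
large part cannot be shed, since the rest of its part is a face of the link and a facet of the
deletion; shedding a singleton part keeps both large parts, and a complex with two parts is
not a simplex.
-/

section PartComplex

variable {α ι : Type*} (p : α → ι)

/-- The disjoint union of the simplices on the fibres of `p` inside `W`. -/
def partComplex (W : Finset α) : Set (Finset α) :=
  {A | A ⊆ W ∧ ∀ x ∈ A, ∀ y ∈ A, p x = p y}

def AtMostOneLargeFiber (W : Finset α) : Prop :=
  ∀ a ∈ W, ∀ b ∈ W, ∀ c ∈ W, ∀ d ∈ W, a ≠ b → c ≠ d → p a = p b → p c = p d → p a = p c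

variable {p}

lemma AtMostOneLargeFiber.mono {W W' : Finset α} (h : AtMostOneLargeFiber p W) (hW : W' ⊆ W) :
    AtMostOneLargeFiber p W' :=
  fun a ha b hb c hc d hd => h a (hW ha) b (hW hb) c (hW hc) d (hW hd)

lemma partComplex_eq_simplex {W : Finset α} (hW : ∀ x ∈ W, ∀ y ∈ W, p x = p y) :
    partComplex p W = {A | A ⊆ W} := by
  ext A
  exact ⟨And.left, fun hA => ⟨hA, fun x hx y hy => hW x (hA hx) y (hA hy)⟩⟩

lemma exists_fiber_eq_singleton {W : Finset α} (h : AtMostOneLargeFiber p W)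
    {x y : α} (hx : x ∈ W) (hy : y ∈ W) (hxy : p x ≠ p y) :
    ∃ v ∈ W, (∃ u ∈ W, p u ≠ p v) ∧ ∀ w ∈ W, p w = p v → w = v := by
  by_contra! hne
  obtain ⟨x', hx', hpx, hx'x⟩ := hne x hx ⟨y, hy, hxy.symm⟩
  obtain ⟨y', hy', hpy, hy'y⟩ := hne y hy ⟨x, hx, hxy⟩
  exact hxy (h x hx x' hx' y hy y' hy' hx'x.symm hy'y.symm hpx.symm hpy.symm)

variable [DecidableEq α]

lemma atMostOneLargeFiber_of_erase {W : Finset α} {v : α}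
    (h : AtMostOneLargeFiber p (W.erase v))
    (hv : ∀ a ∈ W, ∀ b ∈ W, a ≠ b → p a = p b → a ≠ v) :
    AtMostOneLargeFiber p W := by
  intro a ha b hb c hc d hd hab hcd habp hcdp
  refine h a ?_ b ?_ c ?_ d ?_ hab hcd habp hcdp <;> refine Finset.mem_erase.2 ⟨?_, ‹_›⟩
  · exact hv a ha b hb hab habp
  · exact hv b hb a ha hab.symm habp.symm
  · exact hv c hc d hd hcd hcdp
  · exact hv d hd c hc hcd.symm hcdp.symm

lemma delC_partComplex (W : Finset α) (v : α) :
    delC (partComplex p W) v = partComplex p (W.erase v) := by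
  ext A
  simp only [delC, partComplex, Set.mem_ofPred_eq, Finset.subset_erase]
  tauto

lemma linkC_partComplex_of_fiber_eq_singleton {W : Finset α} {v : α} (hv : v ∈ W)
    (hfib : ∀ w ∈ W, p w = p v → w = v) :
    linkC (partComplex p W) v = {A | A ⊆ ∅} := by
  ext A
  simp only [linkC, partComplex, Set.mem_ofPred_eq, Finset.subset_empty]
  constructor
  · rintro ⟨hvA, hAW, hconst⟩
    refine Finset.eq_empty_of_forall_notMem fun x hx => hvA ?_
    have hxv : x = v := hfib x (hAW (Finset.mem_insert_of_mem hx))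
      (hconst x (Finset.mem_insert_of_mem hx) v (Finset.mem_insert_self v A))
    exact hxv ▸ hx
  · rintro rfl
    simpa using hv

theorem vertexDecomposable_partComplex (W : Finset α) (h : AtMostOneLargeFiber p W) :
    VertexDecomposable (partComplex p W) := by
  induction W using Finset.strongInduction with
  | H W ih =>
  by_cases hconst : ∀ x ∈ W, ∀ y ∈ W, p x = p y
  · exact .simplex _ (Or.inr ⟨W, partComplex_eq_simplex hconst⟩)
  push Not at hconst
  obtain ⟨x, hx, y, hy, hxy⟩ := hconst
  obtain ⟨v, hv, ⟨u, hu, huv⟩, hfib⟩ := exists_fiber_eq_singleton h hx hy hxy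
  have hlink := linkC_partComplex_of_fiber_eq_singleton hv hfib
  refine .step _ v ?_ ?_ ?_
  · rw [delC_partComplex]
    exact ih _ (Finset.erase_ssubset hv) (h.mono (Finset.erase_subset v W))
  · rw [hlink]
    exact .simplex _ (Or.inr ⟨∅, rfl⟩)
  · rintro A hA ⟨-, hmax⟩
    rw [hlink, Set.mem_ofPred_eq, Finset.subset_empty] at hA
    subst hA
    have hu' : {u} ∈ delC (partComplex p W) v := by
      rw [delC_partComplex]
      refine ⟨?_, by simp⟩
      rw [Finset.singleton_subset_iff, Finset.mem_erase]
      exact ⟨fun huv' => huv (huv' ▸ rfl), hu⟩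
    exact Finset.singleton_ne_empty u (hmax _ hu' (Finset.empty_subset _)).symm

lemma exists_mem_linkC_isFacetOf_delC_partComplex {W : Finset α} {v w : α} (hv : v ∈ W)
    (hw : w ∈ W) (hwv : w ≠ v) (hpw : p w = p v) :
    ∃ A ∈ linkC (partComplex p W) v, IsFacetOf (delC (partComplex p W) v) A := by
  classical
  set A := (W.filter fun u => p u = p v).erase v
  have hmemA : ∀ u, u ∈ A ↔ u ≠ v ∧ u ∈ W ∧ p u = p v := by
    intro u
    simp [A]
  have hconst : ∀ x ∈ insert v A, p x = p v := by
    intro x hx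
    rcases Finset.mem_insert.1 hx with rfl | hx
    exacts [rfl, ((hmemA x).1 hx).2.2]
  refine ⟨A, ⟨Finset.notMem_erase v _, ?_, ?_⟩, ⟨⟨⟨?_, ?_⟩, Finset.notMem_erase v _⟩, ?_⟩⟩
  · exact Finset.insert_subset hv fun u hu => ((hmemA u).1 hu).2.1
  · intro x hx y hy
    rw [hconst x hx, hconst y hy]
  · exact fun u hu => ((hmemA u).1 hu).2.1
  · intro x hx y hy
    rw [((hmemA x).1 hx).2.2, ((hmemA y).1 hy).2.2]
  · -- a face containing `w` lies in the fibre of `v`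
    rintro B ⟨⟨hBW, hBconst⟩, hvB⟩ hAB
    have hwA : w ∈ A := (hmemA w).2 ⟨hwv, hw, hpw⟩
    refine hAB.antisymm fun x hx => (hmemA x).2 ⟨?_, hBW hx, ?_⟩
    · rintro rfl
      exact hvB hx
    · rw [hBconst x hx w (hAB hwA), hpw]

lemma const_of_partComplex_eq_simplex {W F : Finset α} (hF : partComplex p W = {A | A ⊆ F}) :
    ∀ a ∈ W, ∀ c ∈ W, p a = p c := by
  have hsingleton : ∀ a ∈ W, a ∈ F := by
    intro a ha
    have : {a} ∈ partComplex p W := ⟨Finset.singleton_subset_iff.2 ha, by simp⟩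
    rw [hF] at this
    exact Finset.singleton_subset_iff.1 this
  intro a ha c hc
  have hac : {a, c} ∈ partComplex p W := by
    rw [hF]
    exact Finset.insert_subset (hsingleton a ha) (Finset.singleton_subset_iff.2 (hsingleton c hc))
  exact hac.2 a (by simp) c (by simp)

theorem VertexDecomposable.atMostOneLargeFiber {Δ : Set (Finset α)} (h : VertexDecomposable Δ)
    {W : Finset α} (hΔ : Δ = partComplex p W) : AtMostOneLargeFiber p W := by
  induction h generalizing W with
  | simplex Δ hsimplex =>
    subst hΔ
    rcases hsimplex with hempty | ⟨F, hF⟩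
    · have : ∅ ∈ partComplex p W := ⟨Finset.empty_subset W, by simp⟩
      simp [hempty] at this
    · exact fun a ha _ _ c hc _ _ _ _ _ _ => const_of_partComplex_eq_simplex hF a ha c hc
  | step Δ v _ _ hnf ihdel _ =>
    subst hΔ
    by_cases hv : v ∈ W ∧ ∃ w ∈ W, w ≠ v ∧ p w = p v
    · obtain ⟨hv, w, hw, hwv, hpw⟩ := hv
      obtain ⟨A, hlink, hfacet⟩ := exists_mem_linkC_isFacetOf_delC_partComplex hv hw hwv hpw
      exact absurd hfacet (hnf A hlink)
    · refine atMostOneLargeFiber_of_erase (ihdel (delC_partComplex W v)) ?_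
      rintro a ha b hb hab hpab rfl
      exact hv ⟨ha, b, hb, hab.symm, hpab.symm⟩

theorem vertexDecomposable_partComplex_iff (W : Finset α) :
    VertexDecomposable (partComplex p W) ↔ AtMostOneLargeFiber p W :=
  ⟨fun h => h.atMostOneLargeFiber rfl, vertexDecomposable_partComplex W⟩

end PartComplex

lemma indComplex_eq_partComplex {α ι : Type*} [Fintype α] {G : SimpleGraph α}
    {p : α → ι} (hadj : ∀ a b, G.Adj a b ↔ p a ≠ p b) :
    indComplex G = partComplex p Finset.univ := by
  ext A
  simp only [indComplex, IsIndep, partComplex, Set.mem_ofPred_eq, Finset.mem_coe, hadj, not_not,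
    Finset.subset_univ, true_and]
  exact ⟨fun h x hx y hy => h hx hy, fun h x y hx hy => h x hx y hy⟩

lemma atMostOneLargeFiber_univ_iff {α ι : Type*} [Fintype α] (p : α → ι) :
    AtMostOneLargeFiber p Finset.univ ↔
      ∀ i j, 1 < (p ⁻¹' {i}).ncard → 1 < (p ⁻¹' {j}).ncard → i = j := by
  simp only [AtMostOneLargeFiber, Finset.mem_univ, forall_const,
    Set.one_lt_ncard_iff (Set.toFinite _), Set.mem_preimage, Set.mem_singleton_iff]
  constructor
  · rintro h i j ⟨a, b, rfl, hb, hab⟩ ⟨c, d, rfl, hd, hcd⟩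
    exact h a b c d hab hcd hb.symm hd.symm
  · intro h a b c d hab hcd habp hcdp
    exact h _ _ ⟨a, b, rfl, habp.symm, hab⟩ ⟨c, d, rfl, hcdp.symm, hcd⟩

theorem stmt_7_general (G : SimpleGraph V) (t : ℕ) (part : V → Fin t)
    (hadj : ∀ a b : V, G.Adj a b ↔ part a ≠ part b) :
    VertexDecomposable (indComplex G) ↔
      ∀ i j : Fin t, 1 < (part ⁻¹' {i} : Set V).ncard →
        1 < (part ⁻¹' {j} : Set V).ncard → i = j := by
  rw [indComplex_eq_partComplex hadj, vertexDecomposable_partComplex_iff,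
    atMostOneLargeFiber_univ_iff]

/-- A complete t-partite graph is vertex decomposable iff at most one part has
more than one element. -/
theorem stmt_7 (G : SimpleGraph V) (t : ℕ) (part : V → Fin t)
    (hsurj : Function.Surjective part)
    (hadj : ∀ a b : V, G.Adj a b ↔ part a ≠ part b) :
    VertexDecomposable (indComplex G) ↔
      ∀ i j : Fin t, 1 < (part ⁻¹' {i} : Set V).ncard →
        1 < (part ⁻¹' {j} : Set V).ncard → i = j :=
  stmt_7_general G t part hadj
end

section
/- A complete t-partite graph with nonempty parts V_1, ..., V_t is unmixed (all minimal vertex covers have the same cardinality) if and only if all parts V_i have the same number of elements. -/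
/-!
In a complete multipartite graph two vertices outside a vertex cover must lie in the same part,
so every vertex cover contains the complement of some part; and the complement of a nonempty part
is itself a minimal vertex cover. Hence the minimal vertex covers are exactly the complements of
the parts, and they all have the same size iff all parts do.
-/

variable {V : Type*} [Fintype V] [DecidableEq V]


/-- `C` is a vertex cover of `G`. -/
def IsVC (G : SimpleGraph V) (C : Set V) : Prop :=
  ∀ ⦃a b : V⦄, G.Adj a b → a ∈ C ∨ b ∈ C

/-- `C` is a minimal vertex cover of `G`. -/
def IsMinVC (G : SimpleGraph V) (C : Set V) : Prop :=
  IsVC G C ∧ ∀ D : Set V, D ⊆ C → IsVC G D → D = C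

theorem Set.ncard_compl_eq_ncard_compl_iff {α : Type*} [Finite α] {s t : Set α} :
    sᶜ.ncard = tᶜ.ncard ↔ s.ncard = t.ncard := by
  have hs := Set.ncard_add_ncard_compl s
  have ht := Set.ncard_add_ncard_compl t
  omega

section CompleteMultipartite

variable {α ι : Type*} {G : SimpleGraph α} {part : α → ι}

theorem isVC_compl_fiber (hadj : ∀ a b, G.Adj a b ↔ part a ≠ part b) (i : ι) :
    IsVC G (part ⁻¹' {i})ᶜ := by
  intro a b hab
  by_contra! h
  simp only [Set.mem_compl_iff, Set.mem_preimage, Set.mem_singleton_iff, not_not] at h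
  exact (hadj a b).1 hab (h.1.trans h.2.symm)

theorem IsVC.compl_fiber_subset (hadj : ∀ a b, G.Adj a b ↔ part a ≠ part b) {C : Set α}
    (hC : IsVC G C) {v : α} (hv : v ∉ C) : (part ⁻¹' {part v})ᶜ ⊆ C := by
  intro w hw
  have hvw : G.Adj v w := (hadj v w).2 fun h => hw h.symm
  exact (hC hvw).resolve_left hv

theorem isMinVC_compl_fiber (hadj : ∀ a b, G.Adj a b ↔ part a ≠ part b) {i : ι}
    (hi : i ∈ Set.range part) : IsMinVC G (part ⁻¹' {i})ᶜ := by
  refine ⟨isVC_compl_fiber hadj i, fun D hD hDvc => hD.antisymm ?_⟩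
  obtain ⟨w, rfl⟩ := hi
  have hwD : w ∉ D := fun h => hD h rfl
  exact hDvc.compl_fiber_subset hadj hwD

theorem IsMinVC.eq_compl_fiber [Nonempty α] (hadj : ∀ a b, G.Adj a b ↔ part a ≠ part b)
    {C : Set α} (hC : IsMinVC G C) : ∃ i, C = (part ⁻¹' {i})ᶜ := by
  obtain ⟨i, hiC⟩ : ∃ i, (part ⁻¹' {i})ᶜ ⊆ C := by
    by_cases hC_univ : C = Set.univ
    · exact ⟨part (Classical.arbitrary α), hC_univ ▸ Set.subset_univ _⟩
    · obtain ⟨v, hv⟩ := (Set.ne_univ_iff_exists_notMem C).1 hC_univ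
      exact ⟨part v, hC.1.compl_fiber_subset hadj hv⟩
  exact ⟨i, (hC.2 _ hiC (isVC_compl_fiber hadj i)).symm⟩

end CompleteMultipartite

/-- A complete t-partite graph is unmixed iff all parts have the same number of
elements. -/
theorem stmt_8 (G : SimpleGraph V) (t : ℕ) (part : V → Fin t)
    (hsurj : Function.Surjective part)
    (hadj : ∀ a b : V, G.Adj a b ↔ part a ≠ part b) :
    (∀ C D : Set V, IsMinVC G C → IsMinVC G D → C.ncard = D.ncard) ↔
      ∀ i j : Fin t, (part ⁻¹' {i} : Set V).ncard = (part ⁻¹' {j} : Set V).ncard := by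
  constructor
  · intro hunmixed i j
    exact Set.ncard_compl_eq_ncard_compl_iff.1 <| hunmixed _ _
      (isMinVC_compl_fiber hadj (hsurj i)) (isMinVC_compl_fiber hadj (hsurj j))
  · intro hparts C D hC hD
    cases isEmpty_or_nonempty V
    · rw [Set.eq_empty_of_isEmpty C, Set.eq_empty_of_isEmpty D]
    · obtain ⟨i, rfl⟩ := hC.eq_compl_fiber hadj
      obtain ⟨j, rfl⟩ := hD.eq_compl_fiber hadj
      exact Set.ncard_compl_eq_ncard_compl_iff.2 (hparts i j)
end

section
/- For a complete t-partite graph G with nonempty parts, the independence complex of G is shellable if and only if it is vertex decomposable. -/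
variable {V : Type*} [Fintype V] [DecidableEq V]


/-!
In a complete multipartite graph non-adjacency is transitive, so two maximal independent sets
that meet have an independent union and coincide: the independence complex is a disjoint union
of simplices. For such a complex both properties are equivalent to having at most one facet with
more than one vertex. In a shelling of pairwise disjoint facets, `F j \ F l = {v}` with `l ≠ j`
forces `F j = {v}`, so every facet but the first is a point. For vertex decomposability, a
shedding vertex `v` cannot lie in a facet `P` with `#P ≥ 2`, since `P.erase v` would be a face of
the link that is a facet of the deletion; so deletion keeps any two big facets, while a simplex
has only one facet. Conversely, isolated points can be shed one at a time until a single simplex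
is left.
-/

open Finset

section Faces

omit [Fintype V]

lemma delC_lowerClosure (S : Set (Finset V)) (v : V) :
    delC (lowerClosure S : Set (Finset V)) v = lowerClosure ((·.erase v) '' S) := by
  ext A
  constructor
  · rintro ⟨⟨P, hP, hAP⟩, hvA⟩
    exact ⟨P.erase v, ⟨P, hP, rfl⟩, subset_erase.2 ⟨hAP, hvA⟩⟩
  · rintro ⟨_, ⟨P, hP, rfl⟩, hAP⟩
    exact ⟨⟨P, hP, (subset_erase.1 hAP).1⟩, (subset_erase.1 hAP).2⟩

variable {S : Set (Finset V)} {v : V}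

lemma Set.PairwiseDisjoint.image_erase (hS : S.PairwiseDisjoint id) :
    ((·.erase v) '' S).PairwiseDisjoint id :=
  hS.image_of_le fun P => erase_subset v P

lemma linkC_lowerClosure_of_singleton_mem (hS : S.PairwiseDisjoint id) (hv : {v} ∈ S) :
    linkC (lowerClosure S : Set (Finset V)) v = {A | A ⊆ ∅} := by
  ext A
  constructor
  · rintro ⟨hvA, Q, hQ, hAQ⟩
    obtain rfl : Q = {v} := hS.elim hQ hv <| not_disjoint_iff.2
      ⟨v, hAQ (mem_insert_self v A), mem_singleton_self v⟩
    intro a ha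
    obtain rfl := mem_singleton.1 (hAQ (mem_insert_of_mem ha))
    exact absurd ha hvA
  · intro hA
    obtain rfl := subset_empty.1 hA
    exact ⟨notMem_empty v, {v}, hv, by simp⟩

omit [DecidableEq V]

lemma delC_ssubset {Δ : Set (Finset V)} (h : {v} ∈ Δ) : delC Δ v ⊂ Δ :=
  (Set.ssubset_iff_of_subset fun _ hA => hA.1).2 ⟨{v}, h, fun hv => hv.2 (mem_singleton_self v)⟩

lemma isFacetOf_lowerClosure (hS : S.PairwiseDisjoint id) {P : Finset V} (hP : P ∈ S)
    (hne : P.Nonempty) : IsFacetOf (lowerClosure S : Set (Finset V)) P := by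
  refine ⟨⟨P, hP, subset_rfl⟩, ?_⟩
  rintro B ⟨Q, hQ, hBQ⟩ hPB
  obtain ⟨a, ha⟩ := hne
  obtain rfl : P = Q := hS.elim hP hQ (not_disjoint_iff.2 ⟨a, ha, hBQ (hPB ha)⟩)
  exact subset_antisymm hPB hBQ

end Faces

section VertexDecomposable

variable {S : Set (Finset V)}

lemma vertexDecomposable_lowerClosure_of_subsingleton (h : {P ∈ S | P.Nonempty}.Subsingleton) :
    VertexDecomposable (lowerClosure S : Set (Finset V)) := by
  refine .simplex _ ?_
  rcases S.eq_empty_or_nonempty with rfl | ⟨Q, hQ⟩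
  · left
    simp
  right
  by_cases hne : ∃ P ∈ S, P.Nonempty
  · obtain ⟨P, hP, hPne⟩ := hne
    refine ⟨P, Set.ext fun A => ⟨?_, fun hA => ⟨P, hP, hA⟩⟩⟩
    rintro ⟨R, hR, hAR⟩
    rcases R.eq_empty_or_nonempty with rfl | hRne
    · exact (subset_empty.1 hAR).symm ▸ empty_subset P
    · exact h ⟨hR, hRne⟩ ⟨hP, hPne⟩ ▸ hAR
  · push Not at hne
    refine ⟨∅, Set.ext fun A => ⟨?_, fun hA => ⟨Q, hQ, hA.trans (empty_subset Q)⟩⟩⟩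
    rintro ⟨R, hR, hAR⟩
    exact hne R hR ▸ hAR

lemma vertexDecomposable_lowerClosure (hS : S.PairwiseDisjoint id)
    (hbig : {P ∈ S | 1 < #P}.Subsingleton) :
    VertexDecomposable (lowerClosure S : Set (Finset V)) := by
  induction hn : (lowerClosure S : Set (Finset V)).ncard using Nat.strong_induction_on
    generalizing S with
  | _ n ih =>
  by_cases hsub : {P ∈ S | P.Nonempty}.Subsingleton
  · exact vertexDecomposable_lowerClosure_of_subsingleton hsub
  obtain ⟨v, hv, Q, hQ, hQv, hQne⟩ : ∃ v, {v} ∈ S ∧ ∃ Q ∈ S, Q ≠ {v} ∧ Q.Nonempty := by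
    obtain ⟨P, ⟨hP, hPne⟩, Q, ⟨hQ, hQne⟩, hPQ⟩ := Set.not_subsingleton_iff.1 hsub
    have hsmall : #P ≤ 1 ∨ #Q ≤ 1 := by
      by_contra! h
      exact hPQ (hbig ⟨hP, h.1⟩ ⟨hQ, h.2⟩)
    rcases hsmall with h | h
    · obtain ⟨v, rfl⟩ := card_eq_one.1 (le_antisymm h hPne.card_pos)
      exact ⟨v, hP, Q, hQ, hPQ.symm, hQne⟩
    · obtain ⟨v, rfl⟩ := card_eq_one.1 (le_antisymm h hQne.card_pos)
      exact ⟨v, hQ, P, hP, hPQ, hPne⟩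
  have hvQ : v ∉ Q := disjoint_singleton_right.1 (hS hQ hv hQv)
  have hlink := linkC_lowerClosure_of_singleton_mem hS hv
  refine .step _ v ?_ (hlink ▸ .simplex _ (Or.inr ⟨∅, rfl⟩)) ?_
  · have hlt : (delC (lowerClosure S : Set (Finset V)) v).ncard < n :=
      hn ▸ Set.ncard_lt_ncard (delC_ssubset ⟨{v}, hv, subset_rfl⟩) (Set.toFinite _)
    rw [delC_lowerClosure] at hlt ⊢
    refine ih _ hlt hS.image_erase ?_ rfl
    rintro _ ⟨⟨P, hP, rfl⟩, hP1⟩ _ ⟨⟨P', hP', rfl⟩, hP1'⟩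
    rw [hbig ⟨hP, hP1.trans_le card_erase_le⟩ ⟨hP', hP1'.trans_le card_erase_le⟩]
  · rw [hlink]
    rintro A hA ⟨-, hmax⟩
    obtain rfl := subset_empty.1 hA
    exact hQne.ne_empty (hmax Q ⟨⟨Q, hQ, subset_rfl⟩, hvQ⟩ (empty_subset Q)).symm

omit [Fintype V] in
lemma subsingleton_of_vertexDecomposable_lowerClosure (hS : S.PairwiseDisjoint id)
    (h : VertexDecomposable (lowerClosure S : Set (Finset V))) :
    {P ∈ S | 1 < #P}.Subsingleton := by
  generalize hΔ : (lowerClosure S : Set (Finset V)) = Δ at h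
  induction h generalizing S with
  | simplex Δ hsimplex =>
    subst hΔ
    rcases hsimplex with hempty | ⟨F, hF⟩
    · rintro P ⟨hP, -⟩
      exact absurd (hempty ▸ subset_lowerClosure hP) (Set.notMem_empty P)
    · have hbig : ∀ P ∈ {P ∈ S | 1 < #P}, P = F := by
        rintro P ⟨hP, hP1⟩
        refine (isFacetOf_lowerClosure hS hP (card_pos.1 (zero_lt_one.trans hP1))).2 F ?_ ?_
        · exact hF ▸ Subset.refl F
        · exact (hF ▸ subset_lowerClosure hP : P ∈ {A | A ⊆ F})
      exact fun P hP Q hQ => (hbig P hP).trans (hbig Q hQ).symm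
  | step Δ v _ _ hnf ihdel _ =>
    subst hΔ
    have hvbig : ∀ P ∈ S, 1 < #P → v ∉ P := by
      intro P hP hP1 hvP
      refine hnf (P.erase v) ⟨notMem_erase v P, ?_⟩ ?_
      · rw [insert_erase hvP]
        exact subset_lowerClosure hP
      · rw [delC_lowerClosure]
        refine isFacetOf_lowerClosure hS.image_erase ⟨P, hP, rfl⟩ ?_
        rw [← card_pos, card_erase_of_mem hvP]
        omega
    have herase : ∀ P ∈ {P ∈ S | 1 < #P}, P ∈ {Q ∈ (·.erase v) '' S | 1 < #Q} := by
      rintro P ⟨hP, hP1⟩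
      have hPv : P.erase v = P := erase_eq_of_notMem (hvbig P hP hP1)
      exact ⟨⟨P, hP, hPv⟩, hP1⟩
    exact fun P hP Q hQ =>
      ihdel hS.image_erase (delC_lowerClosure S v).symm (herase P hP) (herase Q hQ)

theorem vertexDecomposable_lowerClosure_iff (hS : S.PairwiseDisjoint id) :
    VertexDecomposable (lowerClosure S : Set (Finset V)) ↔ {P ∈ S | 1 < #P}.Subsingleton :=
  ⟨subsingleton_of_vertexDecomposable_lowerClosure hS, vertexDecomposable_lowerClosure hS⟩

end VertexDecomposable

lemma exists_equiv_fin_forall_lt_not {α : Type*} [Finite α] {p : α → Prop}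
    (hp : {a | p a}.Subsingleton) : ∃ (n : ℕ) (e : Fin n ≃ α), ∀ i j, i < j → ¬ p (e j) := by
  let e₀ := (Finite.equivFin α).symm
  by_cases h : ∃ a, p a
  · obtain ⟨a, ha⟩ := h
    let k := e₀.symm a
    let z : Fin (Nat.card α) := ⟨0, Nat.card_pos_iff.2 ⟨⟨a⟩, inferInstance⟩⟩
    refine ⟨_, (Equiv.swap z k).trans e₀, fun i j hij hj => ?_⟩
    have hjk : Equiv.swap z k j = k := e₀.injective ((hp hj ha).trans (e₀.apply_symm_apply a).symm)
    rw [Equiv.swap_apply_eq_iff, Equiv.swap_apply_right] at hjk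
    rw [hjk] at hij
    exact Nat.not_lt_zero _ hij
  · push Not at h
    exact ⟨_, e₀, fun _ j _ => h (e₀ j)⟩

section Graph

variable (G : SimpleGraph V)

def indFacets : Set (Finset V) := {A | IsFacet G A}

variable {G}

omit [Fintype V] [DecidableEq V] in
lemma IsFacet.nonempty_of_ne {A B : Finset V} (hA : IsFacet G A) (hB : IsFacet G B) (hAB : A ≠ B) :
    A.Nonempty := by
  rw [nonempty_iff_ne_empty]
  rintro rfl
  exact hAB (hA.2 B hB.1 (empty_subset B))

omit [DecidableEq V] in
lemma indComplex_eq_lowerClosure : indComplex G = lowerClosure (indFacets G) := by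
  ext A
  constructor
  · intro hA
    obtain ⟨B, hAB, hB⟩ := Finite.exists_le_maximal (p := (· ∈ indComplex G)) hA
    exact ⟨B, ⟨hB.prop, fun C hC hBC => hB.eq_of_le hC hBC⟩, hAB⟩
  · rintro ⟨B, hB, hAB⟩ a b ha hb
    exact hB.1 (hAB ha) (hAB hb)

omit [Fintype V] in
lemma indFacets_pairwiseDisjoint (htrans : ∀ a b c, ¬ G.Adj a b → ¬ G.Adj b c → ¬ G.Adj a c) :
    (indFacets G).PairwiseDisjoint id := by
  intro A hA B hB hAB
  refine not_not.1 fun hmeet => hAB ?_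
  obtain ⟨v, hvA, hvB⟩ := not_disjoint_iff.1 hmeet
  have hv : ∀ x ∈ A ∪ B, ¬ G.Adj x v := by
    intro x hx
    rcases mem_union.1 hx with hx | hx
    exacts [hA.1 hx hvA, hB.1 hx hvB]
  have hind : IsIndep G ↑(A ∪ B) := fun a b ha hb =>
    htrans a v b (hv a ha) fun hvb => hv b hb hvb.symm
  exact (hA.2 _ hind subset_union_left).trans (hB.2 _ hind subset_union_right).symm

variable (hS : (indFacets G).PairwiseDisjoint id)
include hS

omit [Fintype V] in
lemma Shellable.subsingleton (h : Shellable G) : {A ∈ indFacets G | 1 < #A}.Subsingleton := by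
  obtain ⟨s, F, hinj, hfacet, hshell⟩ := h
  have hF : ∀ i, F i ∈ indFacets G := fun i => (hfacet _).2 ⟨i, rfl⟩
  have hpoint : ∀ i j, i < j → #(F j) = 1 := by
    intro i j hij
    obtain ⟨v, -, -, l, hl, hdiff⟩ := hshell i j hij
    have hdisj : Disjoint (F j) (F l) := hS (hF j) (hF l) (hinj.ne hl.ne')
    rw [sdiff_eq_self_of_disjoint hdisj] at hdiff
    rw [hdiff, card_singleton]
  rintro A ⟨hA, hA1⟩ B ⟨hB, hB1⟩
  obtain ⟨i, rfl⟩ := (hfacet A).1 hA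
  obtain ⟨j, rfl⟩ := (hfacet B).1 hB
  rcases lt_trichotomy i j with h | rfl | h
  · exact absurd (hpoint i j h) hB1.ne'
  · rfl
  · exact absurd (hpoint j i h) hA1.ne'

lemma shellable_of_subsingleton (h : {A ∈ indFacets G | 1 < #A}.Subsingleton) : Shellable G := by
  obtain ⟨s, e, he⟩ := exists_equiv_fin_forall_lt_not (α := indFacets G)
    (p := fun A => 1 < #(A : Finset V)) fun A hA B hB => Subtype.ext (h ⟨A.2, hA⟩ ⟨B.2, hB⟩)
  refine ⟨s, fun i => e i, Subtype.val_injective.comp e.injective, fun A => ?_, ?_⟩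
  · exact ⟨fun hA => ⟨e.symm ⟨A, hA⟩, by simp⟩, by rintro ⟨i, rfl⟩; exact (e i).2⟩
  · intro i j hij
    have hne : (e j : Finset V) ≠ e i := Subtype.val_injective.ne (e.injective.ne hij.ne')
    obtain ⟨v, hv⟩ := card_eq_one.1 <|
      le_antisymm (not_lt.1 (he i j hij)) ((e j).2.nonempty_of_ne (e i).2 hne).card_pos
    have hvi : v ∉ (e i : Finset V) :=
      disjoint_left.1 (hS (e j).2 (e i).2 hne) (hv ▸ mem_singleton_self v)
    refine ⟨v, (hv ▸ mem_singleton_self v : v ∈ (e j : Finset V)), hvi, i, hij, ?_⟩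
    show (e j : Finset V) \ e i = {v}
    rw [hv, sdiff_eq_self_of_disjoint (disjoint_singleton_left.2 hvi)]

theorem shellable_iff_subsingleton : Shellable G ↔ {A ∈ indFacets G | 1 < #A}.Subsingleton :=
  ⟨Shellable.subsingleton hS, shellable_of_subsingleton hS⟩

end Graph

theorem stmt_13_general (G : SimpleGraph V) (t : ℕ) (part : V → Fin t)
    (hadj : ∀ a b : V, G.Adj a b ↔ part a ≠ part b) :
    Shellable G ↔ VertexDecomposable (indComplex G) := by
  have hS : (indFacets G).PairwiseDisjoint id := indFacets_pairwiseDisjoint fun a b c hab hbc => by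
    rw [hadj, not_not] at hab hbc ⊢
    exact hab.trans hbc
  rw [shellable_iff_subsingleton hS, indComplex_eq_lowerClosure,
    vertexDecomposable_lowerClosure_iff hS]

/-- For a complete t-partite graph, shellability of the independence complex is
equivalent to vertex decomposability. -/
theorem stmt_13 (G : SimpleGraph V) (t : ℕ) (part : V → Fin t)
    (hsurj : Function.Surjective part)
    (hadj : ∀ a b : V, G.Adj a b ↔ part a ≠ part b) :
    Shellable G ↔ VertexDecomposable (indComplex G) :=
  stmt_13_general G t part hadj
end
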